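/- Let n ≥ 1 and consider the n-qubit kernel Δ^{(n)}_𝐧 = (1/(4π)^n)·⊗_{j=1}^n (𝟙 + 3𝐧_j·σ), where each 𝐧_j ∈ S². For any state of the form ρ = (1−ε)·2^{−n}𝟙 + ε·ρ_1 with ρ_1 a density operator and 0 ≤ ε ≤ 1/(1 + 2^{2n−1}), the quasi-probability function μ_ρ(𝐧) = Tr(ρ·Δ^{(n)}_𝐧) is non-negative for all 𝐧 ∈ (S²)^n. -/

import Mathlib

open Matrix
open scoped ComplexOrder

/-- A density operator: positive semidefinite with unit trace. -/
def IsDensity {n : Type*} [Fintype n] [DecidableEq n] (ρ : Matrix n n ℂ) : Prop :=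
  ρ.PosSemidef ∧ ρ.trace = 1

/-- Pauli X. -/
def pauliX : Matrix (Fin 2) (Fin 2) ℂ := !![0, 1; 1, 0]
/-- Pauli Y. -/
def pauliY : Matrix (Fin 2) (Fin 2) ℂ := !![0, -Complex.I; Complex.I, 0]
/-- Pauli Z. -/
def pauliZ : Matrix (Fin 2) (Fin 2) ℂ := !![1, 0; 0, -1]

/-- `𝐧·σ` for a vector `𝐧 ∈ ℝ³`. -/
noncomputable def dotSigma (v : Fin 3 → ℝ) : Matrix (Fin 2) (Fin 2) ℂ :=
  (v 0 : ℂ) • pauliX + (v 1 : ℂ) • pauliY + (v 2 : ℂ) • pauliZ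

/-- The `n`-fold tensor (Kronecker) product `⊗_{j=1}^n (𝟙 + 3 𝐧_j·σ)`, realized as the
matrix on `(ℂ²)^{⊗n}` whose entries are products of the factors' entries. -/
noncomputable def kernelCore (n : ℕ) (v : Fin n → (Fin 3 → ℝ)) :
    Matrix (Fin n → Fin 2) (Fin n → Fin 2) ℂ :=
  Matrix.of fun i j =>
    ∏ k : Fin n, ((1 : Matrix (Fin 2) (Fin 2) ℂ) + (3 : ℂ) • dotSigma (v k)) (i k) (j k)

/-!
With `P± = (1 ± 𝐧·σ)/2` the spectral projections of the involution `𝐧·σ`, we have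
`𝟙 + 3𝐧·σ = 4P₊ - 2P₋` and `𝟙 = P₊ + P₋`. Expanding both tensor products over the set `t` of
qubits at which `P₊` is chosen writes the kernel core `K` and the identity as
`∑ₜ 4^|t| (-2)^(n-|t|) Pₜ` and `∑ₜ Pₜ` with positive semidefinite `Pₜ`. Every coefficient is at
least `-2^(2n-1)`, so `K + 2^(2n-1) 𝟙 ≥ 0` and `Re Tr(ρ₁ K) ≥ -2^(2n-1)`. As `Tr K = 2^n`,
`Tr(ρ K) = 1 - ε + ε Tr(ρ₁ K)` has real part at least `1 - ε (1 + 2^(2n-1)) ≥ 0`.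
-/

namespace Matrix

section piKron

variable {ι R : Type*} [Fintype ι] {l m n : ι → Type*}

def piKron [CommMonoid R] (A : ∀ k, Matrix (m k) (n k) R) : Matrix (∀ k, m k) (∀ k, n k) R :=
  of fun i j => ∏ k, A k (i k) (j k)

@[simp]
lemma piKron_apply [CommMonoid R] (A : ∀ k, Matrix (m k) (n k) R) (i : ∀ k, m k)
    (j : ∀ k, n k) :
    piKron A i j = ∏ k, A k (i k) (j k) :=
  rfl

lemma piKron_mul [CommSemiring R] [DecidableEq ι] [∀ k, Fintype (m k)]
    [∀ k, DecidableEq (m k)] (A : ∀ k, Matrix (l k) (m k) R) (B : ∀ k, Matrix (m k) (n k) R) :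
    piKron A * piKron B = piKron fun k => A k * B k := by
  ext i j
  simp only [mul_apply, piKron_apply, Fintype.prod_sum, Finset.prod_mul_distrib]

lemma conjTranspose_piKron [CommMonoid R] [StarMul R] (A : ∀ k, Matrix (m k) (n k) R) :
    (piKron A)ᴴ = piKron fun k => (A k)ᴴ := by
  ext i j
  simp [conjTranspose_apply, star_prod]

lemma piKron_one [CommMonoidWithZero R] [∀ k, DecidableEq (m k)] :
    piKron (fun k => (1 : Matrix (m k) (m k) R)) = 1 := by
  ext i j
  simp only [piKron_apply, one_apply, Finset.prod_boole, Finset.mem_univ, true_implies,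
    funext_iff]

lemma trace_piKron [CommSemiring R] [DecidableEq ι] [∀ k, Fintype (m k)]
    [∀ k, DecidableEq (m k)] (A : ∀ k, Matrix (m k) (m k) R) :
    (piKron A).trace = ∏ k, (A k).trace := by
  simp only [trace, diag_apply, piKron_apply, Fintype.prod_sum]

lemma piKron_piecewise_apply [CommMonoid R] [DecidableEq ι] (t : Finset ι)
    (A B : ∀ k, Matrix (m k) (n k) R) (i : ∀ k, m k) (j : ∀ k, n k) :
    piKron (t.piecewise A B) i j = (∏ k ∈ t, A k (i k) (j k)) * ∏ k ∈ tᶜ, B k (i k) (j k) := by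
  have hentry : ∀ k, t.piecewise A B k (i k) (j k) =
      t.piecewise (fun k => A k (i k) (j k)) (fun k => B k (i k) (j k)) k := fun k => by
    by_cases hk : k ∈ t <;> simp [hk]
  rw [piKron_apply, Finset.prod_congr rfl fun k _ => hentry k, Finset.prod_piecewise,
    Finset.univ_inter, Finset.compl_eq_univ_sdiff]

lemma piKron_smul_add_smul [CommSemiring R] [DecidableEq ι] (a b : R)
    (A B : ∀ k, Matrix (m k) (n k) R) :
    piKron (fun k => a • A k + b • B k) =
      ∑ t : Finset ι, (a ^ t.card * b ^ tᶜ.card) • piKron (t.piecewise A B) := by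
  ext i j
  simp only [sum_apply, smul_apply, piKron_piecewise_apply]
  simp only [piKron_apply, add_apply, smul_apply, smul_eq_mul, Fintype.prod_add,
    Finset.prod_mul_distrib, Finset.prod_const]
  exact Finset.sum_congr rfl fun t _ => by ring

open scoped MatrixOrder in
lemma PosSemidef.piKron {𝕜 : Type*} [RCLike 𝕜] [DecidableEq ι] [∀ k, Fintype (m k)]
    [∀ k, DecidableEq (m k)] {A : ∀ k, Matrix (m k) (m k) 𝕜} (hA : ∀ k, (A k).PosSemidef) :
    (piKron A).PosSemidef := by
  choose B hB using fun k => CStarAlgebra.nonneg_iff_eq_star_mul_self.mp (hA k).nonneg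
  obtain rfl : A = fun k => (B k)ᴴ * B k := funext hB
  rw [← piKron_mul, ← conjTranspose_piKron]
  exact posSemidef_conjTranspose_mul_self _

end piKron

open scoped MatrixOrder in
lemma PosSemidef.trace_mul_nonneg {𝕜 m : Type*} [RCLike 𝕜] [Fintype m] [DecidableEq m]
    {A B : Matrix m m 𝕜} (hA : A.PosSemidef) (hB : B.PosSemidef) : 0 ≤ (A * B).trace := by
  obtain ⟨C, rfl⟩ := CStarAlgebra.nonneg_iff_eq_star_mul_self.mp hA.nonneg
  rw [star_eq_conjTranspose, Matrix.mul_assoc, trace_mul_comm]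
  exact (hB.mul_mul_conjTranspose_same C).trace_nonneg

lemma IsHermitian.posSemidef_inv_two_smul_one_add {𝕜 m : Type*} [RCLike 𝕜] [Fintype m]
    [DecidableEq m] {S : Matrix m m 𝕜} (hS : S.IsHermitian) (hS2 : S * S = 1) :
    ((2 : 𝕜)⁻¹ • (1 + S)).PosSemidef := by
  set P := (2 : 𝕜)⁻¹ • (1 + S)
  have hP : Pᴴ = P := by simp [P, hS.eq]
  have hPP : P * P = P := by
    simp only [P, smul_mul_smul_comm, add_mul, mul_add, one_mul, mul_one, hS2]
    module
  have hPsq : P = Pᴴ * P := by rw [hP, hPP]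
  rw [hPsq]
  exact posSemidef_conjTranspose_mul_self P

end Matrix

lemma neg_two_pow_le_four_pow_mul_neg_two_pow (a b : ℕ) :
    -(2 : ℝ) ^ (2 * (a + b) - 1) ≤ 4 ^ a * (-2) ^ b := by
  rcases Nat.eq_zero_or_pos b with rfl | hb
  · simp only [pow_zero, mul_one]
    exact (neg_nonpos.mpr (by positivity)).trans (by positivity)
  · have h4 : (4 : ℝ) ^ a * 2 ^ b = 2 ^ (2 * a + b) := by
      rw [pow_add, pow_mul]; norm_num
    have habs : -(2 : ℝ) ^ b ≤ (-2) ^ b := by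
      simpa only [abs_pow, abs_neg, abs_two] using neg_abs_le ((-2 : ℝ) ^ b)
    have hmul := mul_le_mul_of_nonneg_left habs (by positivity : (0 : ℝ) ≤ 4 ^ a)
    have hexp : (2 : ℝ) ^ (2 * a + b) ≤ 2 ^ (2 * (a + b) - 1) :=
      pow_le_pow_right₀ one_le_two (by omega)
    linarith

lemma dotSigma_isHermitian (v : Fin 3 → ℝ) : (dotSigma v).IsHermitian := by
  ext i j
  fin_cases i <;> fin_cases j <;>
    simp [dotSigma, pauliX, pauliY, pauliZ, conjTranspose_apply]

lemma dotSigma_mul_self {v : Fin 3 → ℝ} (hv : v 0 ^ 2 + v 1 ^ 2 + v 2 ^ 2 = 1) :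
    dotSigma v * dotSigma v = 1 := by
  ext i j
  fin_cases i <;> fin_cases j <;>
    simp [dotSigma, pauliX, pauliY, pauliZ, mul_apply, Fin.sum_univ_two, Complex.ext_iff] <;>
    constructor <;> linarith

lemma trace_dotSigma (v : Fin 3 → ℝ) : (dotSigma v).trace = 0 := by
  simp [dotSigma, pauliX, pauliY, pauliZ, trace_fin_two]

lemma kernelCore_eq_piKron (n : ℕ) (v : Fin n → Fin 3 → ℝ) :
    kernelCore n v = piKron fun k => 1 + (3 : ℂ) • dotSigma (v k) :=
  rfl

lemma trace_kernelCore (n : ℕ) (v : Fin n → Fin 3 → ℝ) : (kernelCore n v).trace = 2 ^ n := by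
  simp [kernelCore_eq_piKron, trace_piKron, trace_dotSigma, trace_one]

lemma posSemidef_kernelCore_add_smul_one {n : ℕ} {v : Fin n → Fin 3 → ℝ}
    (hv : ∀ k, v k 0 ^ 2 + v k 1 ^ 2 + v k 2 ^ 2 = 1) :
    (kernelCore n v + (((2 : ℝ) ^ (2 * n - 1) : ℝ) : ℂ) • 1).PosSemidef := by
  set P : Fin n → Matrix (Fin 2) (Fin 2) ℂ := fun k => (2 : ℂ)⁻¹ • (1 + dotSigma (v k))
  set Q : Fin n → Matrix (Fin 2) (Fin 2) ℂ := fun k => (2 : ℂ)⁻¹ • (1 - dotSigma (v k))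
  have hK : kernelCore n v = piKron fun k => (4 : ℂ) • P k + (-2 : ℂ) • Q k := by
    rw [kernelCore_eq_piKron]
    congr 1; funext k; module
  have h1 : (1 : Matrix (Fin n → Fin 2) (Fin n → Fin 2) ℂ) =
      piKron fun k => (1 : ℂ) • P k + (1 : ℂ) • Q k := by
    rw [← piKron_one]
    congr 1; funext k; module
  have hPQ : ∀ t : Finset (Fin n), (piKron (t.piecewise P Q)).PosSemidef := fun t =>
    PosSemidef.piKron fun k => by
      by_cases hk : k ∈ t
      · simpa [hk, P] using
          (dotSigma_isHermitian (v k)).posSemidef_inv_two_smul_one_add (dotSigma_mul_self (hv k))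
      · simpa [hk, Q, sub_eq_add_neg] using (dotSigma_isHermitian (v k)).neg
          |>.posSemidef_inv_two_smul_one_add (by simpa using dotSigma_mul_self (hv k))
  rw [hK, h1, piKron_smul_add_smul, piKron_smul_add_smul, Finset.smul_sum,
    ← Finset.sum_add_distrib]
  refine posSemidef_sum _ fun t _ => ?_
  rw [smul_smul, ← add_smul]
  refine (hPQ t).smul ?_
  have hcoeff := neg_two_pow_le_four_pow_mul_neg_two_pow t.card tᶜ.card
  rw [Finset.card_add_card_compl, Fintype.card_fin] at hcoeff
  rw [one_pow, one_pow, mul_one, mul_one]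
  exact_mod_cast (show (0 : ℝ) ≤ 4 ^ t.card * (-2) ^ tᶜ.card + 2 ^ (2 * n - 1) by linarith)

lemma neg_two_pow_le_re_trace_mul_kernelCore {n : ℕ} {v : Fin n → Fin 3 → ℝ}
    (hv : ∀ k, v k 0 ^ 2 + v k 1 ^ 2 + v k 2 ^ 2 = 1)
    {ρ₁ : Matrix (Fin n → Fin 2) (Fin n → Fin 2) ℂ} (hρ₁ : IsDensity ρ₁) :
    -(2 : ℝ) ^ (2 * n - 1) ≤ ((ρ₁ * kernelCore n v).trace).re := by
  have h := hρ₁.1.trace_mul_nonneg (posSemidef_kernelCore_add_smul_one hv)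
  rw [Matrix.mul_add, trace_add, Matrix.mul_smul, mul_one, trace_smul, hρ₁.2, smul_eq_mul,
    mul_one] at h
  have h_re := (Complex.le_def.mp h).1
  simp only [Complex.zero_re, Complex.add_re, Complex.ofReal_re] at h_re
  linarith

theorem nmr_state_nonneg_wigner_general (n : ℕ)
    (v : Fin n → (Fin 3 → ℝ)) (hv : ∀ k, (v k 0) ^ 2 + (v k 1) ^ 2 + (v k 2) ^ 2 = 1)
    (ρ₁ : Matrix (Fin n → Fin 2) (Fin n → Fin 2) ℂ) (hρ₁ : IsDensity ρ₁)
    (ε : ℝ) (hε0 : 0 ≤ ε) (hε1 : ε ≤ 1 / (1 + 2 ^ (2 * n - 1)))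
    (ρ : Matrix (Fin n → Fin 2) (Fin n → Fin 2) ℂ)
    (hρ : ρ = (((1 - ε : ℝ)) : ℂ) • (((2 : ℂ) ^ n)⁻¹ • 1) + ((ε : ℝ) : ℂ) • ρ₁) :
    0 ≤ ((ρ * ((((4 * Real.pi : ℝ) ^ n : ℝ) : ℂ)⁻¹ • kernelCore n v)).trace).re := by
  have htrace : (ρ * kernelCore n v).trace =
      ((1 - ε : ℝ) : ℂ) + (ε : ℂ) * (ρ₁ * kernelCore n v).trace := by
    simp only [hρ, add_mul, smul_mul_assoc, one_mul, trace_add, trace_smul, trace_kernelCore,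
      smul_eq_mul, inv_mul_cancel₀ (pow_ne_zero n (two_ne_zero (α := ℂ))), mul_one]
  rw [Matrix.mul_smul, trace_smul, smul_eq_mul, ← Complex.ofReal_inv, Complex.re_ofReal_mul,
    htrace]
  refine mul_nonneg (by positivity) ?_
  simp only [Complex.add_re, Complex.ofReal_re, Complex.re_ofReal_mul]
  have hε : ε * (1 + 2 ^ (2 * n - 1)) ≤ 1 := by
    rwa [le_div_iff₀ (by positivity)] at hε1
  nlinarith [mul_le_mul_of_nonneg_left (neg_two_pow_le_re_trace_mul_kernelCore hv hρ₁) hε0]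

/-- For `n ≥ 1` qubits, a state `ρ = (1−ε) 2^{−n} 𝟙 + ε ρ₁` with
`0 ≤ ε ≤ 1/(1 + 2^{2n−1})` has non-negative spherical quasi-probability function
`μ_ρ(𝐧) = Tr(ρ Δ^{(n)}_𝐧)`, where `Δ^{(n)}_𝐧 = (1/(4π)^n) ⊗_j (𝟙 + 3𝐧_j·σ)`. -/
theorem nmr_state_nonneg_wigner (n : ℕ) (hn : 1 ≤ n)
    (v : Fin n → (Fin 3 → ℝ)) (hv : ∀ k, (v k 0) ^ 2 + (v k 1) ^ 2 + (v k 2) ^ 2 = 1)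
    (ρ₁ : Matrix (Fin n → Fin 2) (Fin n → Fin 2) ℂ) (hρ₁ : IsDensity ρ₁)
    (ε : ℝ) (hε0 : 0 ≤ ε) (hε1 : ε ≤ 1 / (1 + 2 ^ (2 * n - 1)))
    (ρ : Matrix (Fin n → Fin 2) (Fin n → Fin 2) ℂ)
    (hρ : ρ = (((1 - ε : ℝ)) : ℂ) • (((2 : ℂ) ^ n)⁻¹ • 1) + ((ε : ℝ) : ℂ) • ρ₁) :
    0 ≤ ((ρ * ((((4 * Real.pi : ℝ) ^ n : ℝ) : ℂ)⁻¹ • kernelCore n v)).trace).re :=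
  nmr_state_nonneg_wigner_general n v hv ρ₁ hρ₁ ε hε0 hε1 ρ hρ
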